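/- Let q ≥ 2 be an integer, (ε_d : d ∈ D_q) a probability vector on D_q, and V the associated channel. Then for every real α > 0, Σ_{y ∈ Y} ( Σ_{x ∈ Z_q} (1/q) · V(y ∣ x)^α )^{1/α} = Σ_{d ∈ D_q} ε_d · d^{(α−1)/α}, where the sum over y ranges over all residue classes [r]_d with d ∈ D_q and r ∈ Z_d, and powers of 0 are interpreted as 0. -/

import Mathlib

/-!
Each output class `[r]_d` is reached from exactly `q / d` of the `q` inputs, each time with
probability `ε_d`, so its inner sum is `ε_d ^ α / d` and its `1/α`-th power is
`ε_d / d ^ (1/α)`.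
The `d` classes belonging to the divisor `d` therefore contribute `ε_d · d ^ (1 - 1/α)`.
-/

open Finset

-- The output symbol `[r]_d` is encoded by the pair `(d, r)`.
noncomputable def Vch (ε : ℕ → ℝ) (d r x : ℕ) : ℝ :=
  if x % d = r % d then ε d else 0

lemma Nat.card_filter_range_modEq_of_dvd {q d : ℕ} (hdq : d ∣ q) (r : ℕ) :
    #{x ∈ range q | x ≡ r [MOD d]} = q / d := by
  rcases d.eq_zero_or_pos with rfl | hd
  · simp_all
  rw [← Nat.count_eq_card_filter_range, Nat.count_modEq_card _ hd, Nat.mod_eq_zero_of_dvd hdq]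
  simp

lemma Vch_rpow (ε : ℕ → ℝ) (d r x : ℕ) {α : ℝ} (hα : α ≠ 0) :
    Vch ε d r x ^ α = if x ≡ r [MOD d] then ε d ^ α else 0 := by
  by_cases h : x ≡ r [MOD d]
  · rw [Vch, if_pos h, if_pos (show x % d = r % d from h)]
  · rw [Vch, if_neg h, if_neg (show ¬x % d = r % d from h), Real.zero_rpow hα]

lemma sum_range_mul_Vch_rpow {q d : ℕ} (hq : q ≠ 0) (hdq : d ∣ q) (ε : ℕ → ℝ) (r : ℕ)
    {α : ℝ} (hα : α ≠ 0) :
    ∑ x ∈ range q, (1 / (q : ℝ)) * Vch ε d r x ^ α = ε d ^ α / d := by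
  have hd : d ≠ 0 := ne_zero_of_dvd_ne_zero hq hdq
  simp_rw [Vch_rpow ε d r _ hα, ← mul_sum, sum_ite, sum_const_zero, add_zero, sum_const,
    nsmul_eq_mul, Nat.card_filter_range_modEq_of_dvd hdq,
    Nat.cast_div hdq (Nat.cast_ne_zero.mpr hd)]
  field_simp

lemma Real.rpow_div_rpow_one_div {a b α : ℝ} (ha : 0 ≤ a) (hb : 0 ≤ b) (hα : α ≠ 0) :
    (a ^ α / b) ^ (1 / α) = a / b ^ (1 / α) := by
  rw [Real.div_rpow (Real.rpow_nonneg ha α) hb, ← Real.rpow_mul ha, mul_one_div_cancel hα,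
    Real.rpow_one]

lemma Real.div_rpow_one_div_self {b α : ℝ} (hb : 0 < b) (hα : α ≠ 0) :
    b / b ^ (1 / α) = b ^ ((α - 1) / α) := by
  rw [sub_div, div_self hα, Real.rpow_sub hb, Real.rpow_one]

theorem stmt_6_general (q : ℕ)
    (ε : ℕ → ℝ) (hε : ∀ d ∈ q.divisors, 0 ≤ ε d)
    (α : ℝ) (hα : 0 < α) :
    (∑ d ∈ q.divisors, ∑ r ∈ range d,
        (∑ x ∈ range q, (1 / (q : ℝ)) * (Vch ε d r x) ^ α) ^ (1 / α))
      = ∑ d ∈ q.divisors, ε d * (d : ℝ) ^ ((α - 1) / α) := by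
  refine sum_congr rfl fun d hd => ?_
  obtain ⟨hdq, hq⟩ := Nat.mem_divisors.mp hd
  have hd0 : (0 : ℝ) < d := by exact_mod_cast Nat.pos_of_dvd_of_pos hdq (Nat.pos_of_ne_zero hq)
  simp_rw [sum_range_mul_Vch_rpow hq hdq ε _ hα.ne',
    Real.rpow_div_rpow_one_div (hε d hd) hd0.le hα.ne', sum_const, card_range, nsmul_eq_mul,
    ← Real.div_rpow_one_div_self hd0 hα.ne']
  ring

/-- For every real `α > 0`,
`Σ_{y ∈ Y} (Σ_{x ∈ Z_q} (1/q)·V(y ∣ x)^α)^{1/α} = Σ_{d ∈ D_q} ε_d · d^{(α−1)/α}`,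
where `y` ranges over all residue classes `[r]_d` with `d ∈ D_q`, `r ∈ Z_d`,
and real powers are `Real.rpow` (so powers of `0` with positive exponent are `0`). -/
theorem stmt_6 (q : ℕ) (hq : 2 ≤ q)
    (ε : ℕ → ℝ) (hε : ∀ d ∈ q.divisors, 0 ≤ ε d) (hsum : ∑ d ∈ q.divisors, ε d = 1)
    (α : ℝ) (hα : 0 < α) :
    (∑ d ∈ q.divisors, ∑ r ∈ range d,
        (∑ x ∈ range q, (1 / (q : ℝ)) * (Vch ε d r x) ^ α) ^ (1 / α))
      = ∑ d ∈ q.divisors, ε d * (d : ℝ) ^ ((α - 1) / α) :=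
  stmt_6_general q ε hε α hα
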